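/- arXiv:2603.06831 — 4 statements merged into one kernel-verified Lean document; each statement's English description precedes it below -/
import Mathlib

section
/- Fix v̄ > 0 and ε > 0, and let λ* ≥ 1 be the unique solution of (1/2)(λ − 1 − log λ) = ε with λ ≥ 1. Then the set of variances v ≥ v̄ such that the KL divergence of N(μ, v) with respect to N(μ, v̄) is at most ε equals the interval [v̄, λ* v̄]; hence among all Gaussian measures N(μ, v) with v ≥ v̄ satisfying the KL trust-region constraint D_KL(N(μ, v) ‖ N(μ, v̄)) ≤ ε, the maximal variance (equivalently, the maximal-entropy member) is attained exactly at v = λ* v̄. -/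
open MeasureTheory ProbabilityTheory Real

open scoped Classical in
/-- The Kullback–Leibler divergence of `p` with respect to `q`, valued in `EReal`:
it is `∫ log (dp/dq) dp` when `p ≪ q` and this integral exists, and `+∞` otherwise. -/
noncomputable def klDiv {α : Type*} [MeasurableSpace α] (p q : Measure α) : EReal :=
  if p ≪ q ∧ Integrable (llr p q) p then ((∫ x, llr p q x ∂p : ℝ) : EReal) else ⊤

/-!
The log-likelihood ratio of `N(m, v)` against `N(m, w)` is an affine function of `(x - m)²`, so
its `N(m, v)`-mean, the KL divergence, is `(v/w - 1 - log (v/w)) / 2` by the second moment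
`∫ (x - m)² dN(m, v) = v`. As `t ↦ t - 1 - log t` is strictly increasing on `[1, ∞)`, for `v ≥ v̄`
the trust-region constraint is equivalent to `v / v̄ ≤ λ*`.
-/

open scoped NNReal

namespace ProbabilityTheory

lemma log_gaussianPDFReal (m : ℝ) {v : ℝ≥0} (hv : v ≠ 0) (x : ℝ) :
    log (gaussianPDFReal m v x) = -(x - m) ^ 2 / (2 * v) - log (2 * π * v) / 2 := by
  have hv' : (0 : ℝ) < v := by positivity
  rw [gaussianPDFReal_def, log_mul (by positivity) (exp_ne_zero _), log_exp, log_inv,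
    log_sqrt (by positivity)]
  ring

lemma rnDeriv_gaussianReal_gaussianReal (m₁ m₂ : ℝ) {v w : ℝ≥0} (hv : v ≠ 0) (hw : w ≠ 0) :
    (gaussianReal m₁ v).rnDeriv (gaussianReal m₂ w)
      =ᵐ[volume] fun x ↦ (gaussianPDF m₂ w x)⁻¹ * gaussianPDF m₁ v x := by
  rw [gaussianReal_of_var_ne_zero m₂ hw]
  filter_upwards [Measure.rnDeriv_withDensity_right_of_absolutelyContinuous
      (gaussianReal_absolutelyContinuous m₁ hv) (measurable_gaussianPDF m₂ w).aemeasurable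
      (.of_forall fun x ↦ (gaussianPDF_pos m₂ hw x).ne') (.of_forall fun _ ↦ gaussianPDF_ne_top),
    rnDeriv_gaussianReal m₁ v] with x hx hpdf
  rw [hx, hpdf]

lemma llr_gaussianReal_ae_eq (m₁ m₂ : ℝ) {v w : ℝ≥0} (hv : v ≠ 0) (hw : w ≠ 0) :
    llr (gaussianReal m₁ v) (gaussianReal m₂ w)
      =ᵐ[gaussianReal m₁ v]
        fun x ↦ log (gaussianPDFReal m₁ v x) - log (gaussianPDFReal m₂ w x) := by
  filter_upwards [(gaussianReal_absolutelyContinuous m₁ hv).ae_le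
    (rnDeriv_gaussianReal_gaussianReal m₁ m₂ hv hw)] with x hx
  rw [llr, hx, ENNReal.toReal_mul, ENNReal.toReal_inv, toReal_gaussianPDF, toReal_gaussianPDF,
    log_mul (inv_pos.2 (gaussianPDFReal_pos m₂ w x hw)).ne' (gaussianPDFReal_pos m₁ v x hv).ne',
    log_inv]
  ring

lemma integrable_sq_sub_gaussianReal (m : ℝ) (v : ℝ≥0) :
    Integrable (fun x ↦ (x - m) ^ 2) (gaussianReal m v) :=
  ((memLp_id_gaussianReal 2).sub (memLp_const m)).integrable_sq

lemma integral_sq_sub_gaussianReal (m : ℝ) (v : ℝ≥0) :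
    ∫ x, (x - m) ^ 2 ∂gaussianReal m v = v := by
  rw [← variance_fun_id_gaussianReal (μ := m) (v := v),
    variance_eq_integral measurable_id'.aemeasurable, integral_id_gaussianReal]

lemma klDiv_gaussianReal_gaussianReal (m : ℝ) {v w : ℝ≥0} (hv : v ≠ 0) (hw : w ≠ 0) :
    klDiv (gaussianReal m v) (gaussianReal m w)
      = (((v / w - 1 - log (v / w)) / 2 : ℝ) : EReal) := by
  have hv' : (0 : ℝ) < v := by positivity
  have hw' : (0 : ℝ) < w := by positivity
  have hllr : llr (gaussianReal m v) (gaussianReal m w) =ᵐ[gaussianReal m v]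
      fun x ↦ ((w : ℝ)⁻¹ - (v : ℝ)⁻¹) / 2 * (x - m) ^ 2
        + (log (2 * π * w) - log (2 * π * v)) / 2 := by
    filter_upwards [llr_gaussianReal_ae_eq m m hv hw] with x hx
    rw [hx, log_gaussianPDFReal m hv, log_gaussianPDFReal m hw]
    field_simp
    ring
  have hsq := integrable_sq_sub_gaussianReal m v
  have hint := (hsq.const_mul (((w : ℝ)⁻¹ - (v : ℝ)⁻¹) / 2)).add
    (integrable_const ((log (2 * π * w) - log (2 * π * v)) / 2))
  have hac : (gaussianReal m v) ≪ (gaussianReal m w) :=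
    (gaussianReal_absolutelyContinuous m hv).trans (gaussianReal_absolutelyContinuous' m hw)
  rw [klDiv, if_pos ⟨hac, hint.congr hllr.symm⟩, integral_congr_ae hllr,
    integral_add (hsq.const_mul _) (integrable_const _),
    integral_const_mul, integral_sq_sub_gaussianReal, integral_const, probReal_univ, one_smul,
    log_div hv'.ne' hw'.ne', log_mul (by positivity) hw'.ne', log_mul (by positivity) hv'.ne']
  congr 1
  field_simp
  ring

end ProbabilityTheory

lemma strictMonoOn_sub_one_sub_log : StrictMonoOn (fun t : ℝ ↦ t - 1 - log t) (Set.Ici 1) := by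
  intro s (hs : 1 ≤ s) t _ hst
  have hs0 : 0 < s := zero_lt_one.trans_le hs
  have hlog : log (t / s) < t / s - 1 :=
    log_lt_sub_one_of_pos (div_pos (hs0.trans hst) hs0) ((div_eq_one_iff_eq hs0.ne').not.2 hst.ne')
  rw [log_div (hs0.trans hst).ne' hs0.ne'] at hlog
  have : t / s - 1 ≤ t - s := by
    rw [div_sub_one hs0.ne', div_le_iff₀ hs0]; nlinarith
  dsimp only
  linarith

theorem maxent_trust_region_gaussian_general (μ vbar ε lstar : ℝ) (hvbar : 0 < vbar)
    (hlstar : 1 ≤ lstar) (hroot : (1 / 2 : ℝ) * (lstar - 1 - Real.log lstar) = ε) :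
    {v : ℝ | vbar ≤ v ∧
        klDiv (gaussianReal μ v.toNNReal) (gaussianReal μ vbar.toNNReal) ≤ (ε : EReal)}
      = Set.Icc vbar (lstar * vbar) ∧
    IsGreatest {v : ℝ | vbar ≤ v ∧
        klDiv (gaussianReal μ v.toNNReal) (gaussianReal μ vbar.toNNReal) ≤ (ε : EReal)}
      (lstar * vbar) := by
  have htrust : {v : ℝ | vbar ≤ v ∧
      klDiv (gaussianReal μ v.toNNReal) (gaussianReal μ vbar.toNNReal) ≤ (ε : EReal)}
        = Set.Icc vbar (lstar * vbar) := by
    ext v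
    simp only [Set.mem_ofPred_eq, Set.mem_Icc, and_congr_right_iff]
    intro hv
    have hv0 : 0 < v := hvbar.trans_le hv
    have hratio : v / vbar ∈ Set.Ici 1 := (one_le_div hvbar).2 hv
    rw [klDiv_gaussianReal_gaussianReal μ (by simpa using hv0) (by simpa using hvbar),
      Real.coe_toNNReal _ hv0.le, Real.coe_toNNReal _ hvbar.le, EReal.coe_le_coe_iff, ← hroot,
      ← div_le_iff₀ hvbar, ← strictMonoOn_sub_one_sub_log.le_iff_le hratio hlstar]
    constructor <;> intro h <;> linarith
  exact ⟨htrust, htrust ▸ isGreatest_Icc (le_mul_of_one_le_left hvbar.le hlstar)⟩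

/-- Given a nominal variance `v̄ > 0` and a KL budget `ε > 0`, with `λ* ≥ 1` the unique root of
`(1/2)(λ - 1 - log λ) = ε`, the set of variances `v ≥ v̄` for which
`D_KL(N(μ, v) ‖ N(μ, v̄)) ≤ ε` is exactly the interval `[v̄, λ* v̄]`; hence the maximal variance
(the maximal-entropy Gaussian) within the KL trust region is attained exactly at `v = λ* v̄`. -/
theorem maxent_trust_region_gaussian (μ vbar ε lstar : ℝ) (hvbar : 0 < vbar) (hε : 0 < ε)
    (hlstar : 1 ≤ lstar) (hroot : (1 / 2 : ℝ) * (lstar - 1 - Real.log lstar) = ε) :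
    {v : ℝ | vbar ≤ v ∧
        klDiv (gaussianReal μ v.toNNReal) (gaussianReal μ vbar.toNNReal) ≤ (ε : EReal)}
      = Set.Icc vbar (lstar * vbar) ∧
    IsGreatest {v : ℝ | vbar ≤ v ∧
        klDiv (gaussianReal μ v.toNNReal) (gaussianReal μ vbar.toNNReal) ≤ (ε : EReal)}
      (lstar * vbar) :=
  maxent_trust_region_gaussian_general μ vbar ε lstar hvbar hlstar hroot
end

section
/- Let X be a measurable space, let κ, κ̄ be Markov kernels from X to a measurable space Y with D_KL(κ(x) ‖ κ̄(x)) ≤ η_dyn(x) for all x, let σ > 0, let ℓ : X → ℝ be measurable, and let δc : X → ℝ be measurable with |δc(x)| ≤ Δ(x) for all x. Then for every x ∈ X, the augmented kernel κ(x) ⊗ N(ℓ(x) + δc(x), σ²) satisfies D_KL(κ(x) ⊗ N(ℓ(x) + δc(x), σ²) ‖ κ̄(x) ⊗ N(ℓ(x), σ²)) ≤ η_dyn(x) + Δ(x)²/(2σ²). -/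
open MeasureTheory ProbabilityTheory Real

/-!
KL divergence tensorizes: by the chain rule, `D(μ ⊗ μ' ‖ ν ⊗ ν') = D(μ ‖ ν) + D(μ' ‖ ν')`.
Between two Gaussians of equal variance `v` the log-likelihood ratio is affine,
`x ↦ (μ₁ - μ₂) x / v - (μ₁² - μ₂²) / (2v)`, so its mean under `N(μ₁, v)` is `(μ₁ - μ₂)² / (2v)`.
With `μ₁ - μ₂ = δc(x)` and `|δc(x)| ≤ Δ(x)` the bound follows.
-/

open scoped NNReal

namespace InformationTheory

variable {α β : Type*} [MeasurableSpace α] [MeasurableSpace β]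

lemma klDiv_map_measurableEquiv (μ ν : Measure α) [IsFiniteMeasure μ] [IsFiniteMeasure ν]
    (e : α ≃ᵐ β) : klDiv (μ.map e) (ν.map e) = klDiv μ ν := by
  refine le_antisymm (klDiv_map_le μ ν e.measurable) ?_
  calc klDiv μ ν = klDiv ((μ.map e).map e.symm) ((ν.map e).map e.symm) := by
        simp only [Measure.map_map e.symm.measurable e.measurable, e.symm_comp_self,
          Measure.map_id]
    _ ≤ klDiv (μ.map e) (ν.map e) := klDiv_map_le _ _ e.symm.measurable

lemma klDiv_prod_eq_add (μ ν : Measure α) (μ' ν' : Measure β) [IsProbabilityMeasure μ]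
    [IsFiniteMeasure ν] [IsProbabilityMeasure μ'] [IsProbabilityMeasure ν'] :
    klDiv (μ.prod μ') (ν.prod ν') = klDiv μ ν + klDiv μ' ν' := by
  have h_swap : klDiv (μ.prod μ') (μ.prod ν') = klDiv (μ'.prod μ) (ν'.prod μ) := by
    rw [← Measure.prod_swap (μ := μ) (ν := μ'), ← Measure.prod_swap (μ := μ) (ν := ν')]
    exact (klDiv_map_measurableEquiv (μ.prod μ') (μ.prod ν') MeasurableEquiv.prodComm).symm
  rw [← Measure.compProd_const, ← Measure.compProd_const, klDiv_compProd_eq_add,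
    Measure.compProd_const, Measure.compProd_const, h_swap, ← Measure.compProd_const,
    ← Measure.compProd_const, klDiv_compProd_left]

end InformationTheory

namespace ProbabilityTheory

variable {μ₁ μ₂ : ℝ} {v : ℝ≥0}

lemma integrable_id_gaussianReal : Integrable (fun x ↦ x) (gaussianReal μ₁ v) :=
  (memLp_id_gaussianReal 1).integrable le_rfl

lemma gaussianReal_absolutelyContinuous_gaussianReal (hv : v ≠ 0) :
    gaussianReal μ₁ v ≪ gaussianReal μ₂ v :=
  (gaussianReal_absolutelyContinuous μ₁ hv).trans (gaussianReal_absolutelyContinuous' μ₂ hv)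

lemma llr_gaussianReal (hv : v ≠ 0) :
    llr (gaussianReal μ₁ v) (gaussianReal μ₂ v)
      =ᵐ[gaussianReal μ₂ v] fun x ↦ (μ₁ - μ₂) / v * x - (μ₁ ^ 2 - μ₂ ^ 2) / (2 * v) := by
  filter_upwards [Measure.rnDeriv_eq_div (gaussianReal_absolutelyContinuous μ₁ hv)
      (gaussianReal_absolutelyContinuous μ₂ hv),
    (gaussianReal_absolutelyContinuous μ₂ hv).ae_le (rnDeriv_gaussianReal μ₁ v),
    (gaussianReal_absolutelyContinuous μ₂ hv).ae_le (rnDeriv_gaussianReal μ₂ v)] with x hx h₁ h₂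
  have hv' : (v : ℝ) ≠ 0 := by exact_mod_cast hv
  rw [llr, hx, h₁, h₂, ENNReal.toReal_div, toReal_gaussianPDF, toReal_gaussianPDF,
    gaussianPDFReal, gaussianPDFReal, mul_div_mul_left _ _ (by positivity), ← exp_sub, log_exp]
  field_simp
  ring

lemma integrable_llr_gaussianReal (hv : v ≠ 0) :
    Integrable (llr (gaussianReal μ₁ v) (gaussianReal μ₂ v)) (gaussianReal μ₁ v) :=
  ((integrable_id_gaussianReal.const_mul _).sub (integrable_const _)).congr
    ((gaussianReal_absolutelyContinuous_gaussianReal hv).ae_eq (llr_gaussianReal hv)).symm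

lemma integral_llr_gaussianReal (hv : v ≠ 0) :
    ∫ x, llr (gaussianReal μ₁ v) (gaussianReal μ₂ v) x ∂gaussianReal μ₁ v
      = (μ₁ - μ₂) ^ 2 / (2 * v) := by
  have hv' : (v : ℝ) ≠ 0 := by exact_mod_cast hv
  rw [integral_congr_ae ((gaussianReal_absolutelyContinuous_gaussianReal hv).ae_eq
      (llr_gaussianReal hv)), integral_sub (integrable_id_gaussianReal.const_mul _)
    (integrable_const _), integral_const_mul, integral_id_gaussianReal, integral_const,
    probReal_univ, one_smul]
  field_simp
  ring

lemma klDiv_gaussianReal (hv : v ≠ 0) :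
    InformationTheory.klDiv (gaussianReal μ₁ v) (gaussianReal μ₂ v)
      = ENNReal.ofReal ((μ₁ - μ₂) ^ 2 / (2 * v)) := by
  rw [InformationTheory.klDiv_of_ac_of_integrable
    (gaussianReal_absolutelyContinuous_gaussianReal hv) (integrable_llr_gaussianReal hv),
    integral_llr_gaussianReal hv, probReal_univ, probReal_univ, add_sub_cancel_right]

end ProbabilityTheory

/-- For probability measures Gibbs' inequality makes `∫ llr` nonnegative, so the `ENNReal.ofReal`
in Mathlib's `InformationTheory.klDiv` loses nothing. -/
lemma klDiv_eq_coe_klDiv {α : Type*} [MeasurableSpace α] (μ ν : Measure α)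
    [IsProbabilityMeasure μ] [IsProbabilityMeasure ν] :
    klDiv μ ν = (InformationTheory.klDiv μ ν : EReal) := by
  by_cases h : μ ≪ ν ∧ Integrable (llr μ ν) μ
  · have h_nonneg := InformationTheory.integral_llr_add_sub_measure_univ_nonneg h.1 h.2
    rw [probReal_univ, probReal_univ, add_sub_cancel_right] at h_nonneg
    rw [klDiv, if_pos h, InformationTheory.klDiv_of_ac_of_integrable h.1 h.2, probReal_univ,
      probReal_univ, add_sub_cancel_right, EReal.coe_ennreal_ofReal, max_eq_left h_nonneg]
  · rw [klDiv, if_neg h, InformationTheory.klDiv_eq_top_iff.mpr fun hac hint ↦ h ⟨hac, hint⟩]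
    rfl

theorem kl_augmented_kernel_pointwise_bound_general {X Y : Type*} [MeasurableSpace X] [MeasurableSpace Y]
    (κ κbar : ProbabilityTheory.Kernel X Y)
    [ProbabilityTheory.IsMarkovKernel κ] [ProbabilityTheory.IsMarkovKernel κbar]
    (ηdyn : X → ℝ) (hκ : ∀ x, klDiv (κ x) (κbar x) ≤ ((ηdyn x : ℝ) : EReal))
    (σ : ℝ) (hσ : 0 < σ) (ℓ δc Δ : X → ℝ)
    (hδ : ∀ x, |δc x| ≤ Δ x) :
    ∀ x : X,
      klDiv ((κ x).prod (gaussianReal (ℓ x + δc x) (σ ^ 2).toNNReal))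
          ((κbar x).prod (gaussianReal (ℓ x) (σ ^ 2).toNNReal))
        ≤ ((ηdyn x + (Δ x) ^ 2 / (2 * σ ^ 2) : ℝ) : EReal) := by
  intro x
  have hv : (σ ^ 2).toNNReal ≠ 0 := by simpa using hσ.ne'
  have h_gauss : (δc x) ^ 2 / (2 * ((σ ^ 2).toNNReal : ℝ)) ≤ (Δ x) ^ 2 / (2 * σ ^ 2) := by
    rw [Real.coe_toNNReal _ (sq_nonneg σ)]
    obtain ⟨h_lower, h_upper⟩ := abs_le.mp (hδ x)
    exact div_le_div_of_nonneg_right (sq_le_sq' h_lower h_upper) (by positivity)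
  rw [klDiv_eq_coe_klDiv, InformationTheory.klDiv_prod_eq_add, klDiv_gaussianReal hv,
    add_sub_cancel_left, EReal.coe_ennreal_add, EReal.coe_ennreal_ofReal,
    max_eq_left (by positivity), EReal.coe_add, ← klDiv_eq_coe_klDiv]
  exact add_le_add (hκ x) (EReal.coe_le_coe_iff.mpr h_gauss)

/-- Pointwise feasibility of the augmented kernels: if `D_KL(κ(x) ‖ κ̄(x)) ≤ η_dyn(x)` for all
`x` and the stage cost is perturbed by `δc(x)` with `|δc(x)| ≤ Δ(x)`, then for every `x` the
augmented kernel `κ(x) ⊗ N(ℓ(x) + δc(x), σ²)` lies within KL radius `η_dyn(x) + Δ(x)²/(2σ²)`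
of the nominal augmented kernel `κ̄(x) ⊗ N(ℓ(x), σ²)`. -/
theorem kl_augmented_kernel_pointwise_bound {X Y : Type*} [MeasurableSpace X] [MeasurableSpace Y]
    (κ κbar : ProbabilityTheory.Kernel X Y)
    [ProbabilityTheory.IsMarkovKernel κ] [ProbabilityTheory.IsMarkovKernel κbar]
    (ηdyn : X → ℝ) (hκ : ∀ x, klDiv (κ x) (κbar x) ≤ ((ηdyn x : ℝ) : EReal))
    (σ : ℝ) (hσ : 0 < σ) (ℓ δc Δ : X → ℝ) (hℓ : Measurable ℓ) (hδc : Measurable δc)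
    (hδ : ∀ x, |δc x| ≤ Δ x) :
    ∀ x : X,
      klDiv ((κ x).prod (gaussianReal (ℓ x + δc x) (σ ^ 2).toNNReal))
          ((κbar x).prod (gaussianReal (ℓ x) (σ ^ 2).toNNReal))
        ≤ ((ηdyn x + (Δ x) ^ 2 / (2 * σ ^ 2) : ℝ) : EReal) :=
  kl_augmented_kernel_pointwise_bound_general κ κbar ηdyn hκ σ hσ ℓ δc Δ hδ
end

section
/- Let p, p̄, q be probability measures on a measurable space with p ≪ p̄ ≪ q, let c̄ be a bounded measurable real-valued function, and let η ≥ 0 with D_KL(p ‖ p̄) ≤ η. Then for every α > 0, D_KL(p ‖ q) + ∫ c̄ dp ≤ (1 + α)·η + α · log ∫ ((dp̄/dq)·exp(c̄))^{1/α} dp̄, where dp̄/dq denotes the Radon–Nikodym derivative of p̄ with respect to q (assuming the integral on the right-hand side is finite). -/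
/-!
With `g = (log (dp̄/dq) + c̄) / α`, the integrand on the right is `exp g`, so the Gibbs
variational inequality (nonnegativity of `D_KL(p ‖ p̄.tilted g)`) gives
`∫ g dp ≤ D_KL(p ‖ p̄) + log ∫ exp g dp̄`. Multiplying by `α` and adding `D_KL(p ‖ p̄)` to both sides
yields the claim through the chain rule `log (dp/dq) = log (dp/dp̄) + log (dp̄/dq)`. The only delicate
point is that `log (dp̄/dq)` is `p`-integrable; this follows from the Fenchel–Young inequality
`r t ≤ klFun r + exp t - 1`.
-/

open MeasureTheory ProbabilityTheory Real

section Integrability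

variable {X : Type*} [MeasurableSpace X] {μ ν ξ : Measure X}

lemma mul_le_klFun_add_exp_sub_one {r : ℝ} (hr : 0 ≤ r) (t : ℝ) :
    r * t ≤ InformationTheory.klFun r + exp t - 1 := by
  rcases hr.eq_or_lt with rfl | hr
  · simp [InformationTheory.klFun_zero, (exp_pos t).le]
  · have h := add_one_le_exp (t - log r)
    rw [exp_sub, exp_log hr, le_div_iff₀ hr] at h
    rw [InformationTheory.klFun_apply]
    linarith

variable [IsFiniteMeasure μ] [IsFiniteMeasure ν]

lemma integrable_of_nonneg_of_integrable_exp (hμν : μ ≪ ν) (h_int : Integrable (llr μ ν) μ)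
    {φ : X → ℝ} (hφ : Measurable φ) (hφ_nonneg : ∀ x, 0 ≤ φ x)
    (h_exp : Integrable (fun x ↦ exp (φ x)) ν) : Integrable φ μ := by
  rw [← integrable_toReal_rnDeriv_mul_iff hμν]
  have h_kl := (InformationTheory.integrable_klFun_rnDeriv_iff hμν).mpr h_int
  refine ((h_kl.add h_exp).sub (integrable_const 1)).mono'
    ((Measure.measurable_rnDeriv μ ν).ennreal_toReal.mul hφ).aestronglyMeasurable
    (ae_of_all _ fun x ↦ ?_)
  rw [norm_of_nonneg (mul_nonneg ENNReal.toReal_nonneg (hφ_nonneg x))]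
  exact mul_le_klFun_add_exp_sub_one ENNReal.toReal_nonneg _

lemma integrable_max_zero_of_integrable_exp (hμν : μ ≪ ν) (h_int : Integrable (llr μ ν) μ)
    {φ : X → ℝ} (hφ : Measurable φ) (h_exp : Integrable (fun x ↦ exp (φ x)) ν) :
    Integrable (fun x ↦ max (φ x) 0) μ := by
  refine integrable_of_nonneg_of_integrable_exp hμν h_int (hφ.max measurable_const)
    (fun x ↦ le_max_right _ _) ?_
  refine (h_exp.add (integrable_const 1)).mono'
    (measurable_exp.comp (hφ.max measurable_const)).aestronglyMeasurable (ae_of_all _ fun x ↦ ?_)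
  rw [norm_of_nonneg (exp_pos _).le]
  rcases le_total (φ x) 0 with h | h <;> simp [h, (exp_pos _).le]

/-- The negative part of `llr ν ξ` is always `μ`-integrable, since `exp (-llr ν ξ) = dξ/dν`. -/
lemma integrable_llr_of_ae_le [IsFiniteMeasure ξ] (hμν : μ ≪ ν) (h_int : Integrable (llr μ ν) μ)
    (hνξ : ν ≪ ξ) {u : X → ℝ} (hu : Integrable u μ) (h_le : ∀ᵐ x ∂μ, llr ν ξ x ≤ u x) :
    Integrable (llr ν ξ) μ := by
  have h_neg : Integrable (fun x ↦ max (-llr ν ξ x) 0) μ :=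
    integrable_max_zero_of_integrable_exp hμν h_int (measurable_llr ν ξ).neg
      (Measure.integrable_toReal_rnDeriv.congr (exp_neg_llr hνξ).symm)
  exact integrable_of_le_of_le (measurable_llr ν ξ).aestronglyMeasurable
    (ae_of_all _ fun x ↦ neg_le.mpr (le_max_left _ _)) h_le h_neg.neg hu

end Integrability

section Divergence

variable {X : Type*} [MeasurableSpace X] {μ ν ξ : Measure X}

lemma klDiv_eq_integral_llr (hμν : μ ≪ ν) (h_int : Integrable (llr μ ν) μ) :
    klDiv μ ν = ((∫ x, llr μ ν x ∂μ : ℝ) : EReal) :=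
  if_pos ⟨hμν, h_int⟩

lemma klDiv_le_coe_iff {η : ℝ} :
    klDiv μ ν ≤ η ↔ μ ≪ ν ∧ Integrable (llr μ ν) μ ∧ ∫ x, llr μ ν x ∂μ ≤ η := by
  unfold klDiv
  split_ifs with h
  · simp [h]
  · simp only [top_le_iff, EReal.coe_ne_top, false_iff]
    exact fun h' ↦ h ⟨h'.1, h'.2.1⟩

lemma llr_ae_eq_llr_add_llr [SigmaFinite μ] [SigmaFinite ν] [SigmaFinite ξ]
    (hμν : μ ≪ ν) (hνξ : ν ≪ ξ) :
    llr μ ξ =ᵐ[μ] fun x ↦ llr μ ν x + llr ν ξ x := by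
  filter_upwards [(hμν.trans hνξ).ae_le (Measure.rnDeriv_mul_rnDeriv hμν),
    Measure.rnDeriv_pos hμν, hμν.ae_le (Measure.rnDeriv_pos hνξ),
    hμν.ae_le (Measure.rnDeriv_lt_top μ ν), (hμν.trans hνξ).ae_le (Measure.rnDeriv_lt_top ν ξ)]
    with x h_mul hμν_pos hνξ_pos hμν_lt hνξ_lt
  rw [llr, ← h_mul, Pi.mul_apply, ENNReal.toReal_mul,
    log_mul (ENNReal.toReal_pos hμν_pos.ne' hμν_lt.ne).ne'
      (ENNReal.toReal_pos hνξ_pos.ne' hνξ_lt.ne).ne']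
  rfl

lemma rpow_rnDeriv_mul_exp_ae_eq [SigmaFinite ν] [SigmaFinite ξ] (hνξ : ν ≪ ξ)
    (c : X → ℝ) (α : ℝ) :
    (fun x ↦ ((ν.rnDeriv ξ x).toReal * exp (c x)) ^ (1 / α))
      =ᵐ[ν] fun x ↦ exp ((llr ν ξ x + c x) / α) := by
  filter_upwards [Measure.rnDeriv_pos hνξ, hνξ.ae_le (Measure.rnDeriv_lt_top ν ξ)]
    with x h_pos h_lt
  have hr : 0 < (ν.rnDeriv ξ x).toReal := ENNReal.toReal_pos h_pos.ne' h_lt.ne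
  rw [rpow_def_of_pos (by positivity), log_mul hr.ne' (exp_pos _).ne', log_exp, llr]
  ring_nf

/-- The Gibbs variational (Donsker–Varadhan) inequality. -/
lemma integral_le_integral_llr_add_log_integral_exp [IsProbabilityMeasure μ]
    [IsProbabilityMeasure ν] (hμν : μ ≪ ν) (h_int : Integrable (llr μ ν) μ) {f : X → ℝ}
    (hf : Integrable f μ) (h_exp : Integrable (fun x ↦ exp (f x)) ν) :
    ∫ x, f x ∂μ ≤ ∫ x, llr μ ν x ∂μ + log (∫ x, exp (f x) ∂ν) := by
  have := isProbabilityMeasure_tilted h_exp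
  have h_gibbs := InformationTheory.integral_llr_add_sub_measure_univ_nonneg
    (hμν.trans (absolutelyContinuous_tilted h_exp))
    (integrable_llr_tilted_right hμν hf h_int h_exp)
  rw [integral_llr_tilted_right hμν hf h_exp h_int] at h_gibbs
  simp only [probReal_univ, add_sub_cancel_right] at h_gibbs
  linarith

end Divergence

theorem donsker_varadhan_weak_duality_general {X : Type*} [MeasurableSpace X]
    (p pbar q : Measure X)
    [IsProbabilityMeasure p] [IsProbabilityMeasure pbar] [IsProbabilityMeasure q]
    (hpbarq : pbar ≪ q)
    (cbar : X → ℝ) (hc_meas : Measurable cbar) (C : ℝ) (hc_bdd : ∀ x, |cbar x| ≤ C)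
    (η : ℝ) (hkl : klDiv p pbar ≤ (η : EReal))
    (α : ℝ) (hα : 0 < α)
    (h_fin : Integrable
      (fun x => ((pbar.rnDeriv q x).toReal * Real.exp (cbar x)) ^ (1 / α)) pbar) :
    klDiv p q + ((∫ x, cbar x ∂p : ℝ) : EReal)
      ≤ (((1 + α) * η
          + α * Real.log (∫ x,
              ((pbar.rnDeriv q x).toReal * Real.exp (cbar x)) ^ (1 / α) ∂pbar) : ℝ) : EReal) := by
  obtain ⟨hppbar, h_int, h_le⟩ := klDiv_le_coe_iff.mp hkl
  have hc : Integrable cbar p := .of_bound hc_meas.aestronglyMeasurable C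
    (ae_of_all _ fun x ↦ (norm_eq_abs _).trans_le (hc_bdd x))
  set g : X → ℝ := fun x ↦ (llr pbar q x + cbar x) / α with hg
  have h_eq := rpow_rnDeriv_mul_exp_ae_eq hpbarq cbar α
  have h_exp : Integrable (fun x ↦ exp (g x)) pbar := h_fin.congr h_eq
  have h_llr : Integrable (llr pbar q) p := by
    refine integrable_llr_of_ae_le hppbar h_int hpbarq
      (((integrable_max_zero_of_integrable_exp hppbar h_int (by fun_prop) h_exp).const_mul α).sub
        hc) (ae_of_all _ fun x ↦ ?_)
    have h_mul : α * g x = llr pbar q x + cbar x := mul_div_cancel₀ _ hα.ne'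
    simp only [Pi.sub_apply]
    linarith [mul_le_mul_of_nonneg_left (le_max_left (g x) 0) hα.le]
  have h_chain := llr_ae_eq_llr_add_llr hppbar hpbarq
  have h_dv := integral_le_integral_llr_add_log_integral_exp (f := g) hppbar h_int
    ((h_llr.add hc).div_const α) h_exp
  rw [hg, integral_div, integral_add h_llr hc, div_le_iff₀ hα] at h_dv
  rw [klDiv_eq_integral_llr (hppbar.trans hpbarq) ((h_int.add h_llr).congr h_chain.symm),
    ← EReal.coe_add, EReal.coe_le_coe_iff, integral_congr_ae h_chain, integral_add h_int h_llr,
    integral_congr_ae h_eq]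
  linarith [mul_le_mul_of_nonneg_left h_le hα.le]

/-- Weak duality (Donsker–Varadhan) bound behind the scalar convex reduction of the DR-FREE
inner maximization: if `p ≪ p̄ ≪ q`, `c̄` is bounded measurable and `D_KL(p ‖ p̄) ≤ η`, then
for every `α > 0`,
`D_KL(p ‖ q) + ∫ c̄ dp ≤ (1 + α)·η + α·log ∫ ((dp̄/dq)·exp c̄)^(1/α) dp̄`. -/
theorem donsker_varadhan_weak_duality {X : Type*} [MeasurableSpace X]
    (p pbar q : Measure X)
    [IsProbabilityMeasure p] [IsProbabilityMeasure pbar] [IsProbabilityMeasure q]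
    (hppbar : p ≪ pbar) (hpbarq : pbar ≪ q)
    (cbar : X → ℝ) (hc_meas : Measurable cbar) (C : ℝ) (hc_bdd : ∀ x, |cbar x| ≤ C)
    (η : ℝ) (hη : 0 ≤ η) (hkl : klDiv p pbar ≤ (η : EReal))
    (α : ℝ) (hα : 0 < α)
    (h_fin : Integrable
      (fun x => ((pbar.rnDeriv q x).toReal * Real.exp (cbar x)) ^ (1 / α)) pbar) :
    klDiv p q + ((∫ x, cbar x ∂p : ℝ) : EReal)
      ≤ (((1 + α) * η
          + α * Real.log (∫ x,
              ((pbar.rnDeriv q x).toReal * Real.exp (cbar x)) ^ (1 / α) ∂pbar) : ℝ) : EReal) :=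
  donsker_varadhan_weak_duality_general p pbar q hpbarq cbar hc_meas C hc_bdd η hkl α hα h_fin
end

section
/- Let p̄ be a probability mass function on a finite nonempty type with p̄(x) > 0 for every x, and let ε ≥ 0. Then the maximum of the Shannon entropy H(p) = −∑ₓ p(x) log p(x) over all probability mass functions p satisfying D_KL(p ‖ p̄) ≤ ε is attained, and it is attained by a tilted distribution of the form p_β(x) = p̄(x)^β / (∑_y p̄(y)^β) for some β ∈ [0, 1]. -/
open Real Finset

/-- The power-tilted (flattened) probability mass function `p̄^β / ∑ p̄^β`. -/
noncomputable def tiltedPMF {α : Type*} [Fintype α] (pbar : α → ℝ) (β : ℝ) (x : α) : ℝ :=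
  pbar x ^ β / ∑ y, pbar y ^ β

/-!
Since `log p_β = β log p̄ - log ∑ p̄^β`, Gibbs' inequality `∑ p log p ≥ ∑ p log p_β` rearranges to
`β (D(p_β‖p̄) - D(p‖p̄)) ≤ (1 - β) (H(p_β) - H(p))`. Hence `p_β` maximizes the entropy on the
KL ball as soon as `β < 1` and either `β = 0` or `p_β` lies on the boundary of the ball. Such a `β`
is found by the intermediate value theorem, since `β ↦ D(p_β‖p̄)` is continuous and vanishes at
`β = 1`; only `ε = 0` forces `β = 1`, and then the ball is `{p̄}` by the equality case of Gibbs.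
-/

open InformationTheory

section Gibbs

variable {α : Type*} [Fintype α]

lemma mul_log_div_eq_sub {p q : ℝ} (hq : q ≠ 0) : p * log (p / q) = p * log p - p * log q := by
  rcases eq_or_ne p 0 with rfl | hp
  · simp
  · rw [log_div hp hq, mul_sub]

lemma sum_mul_log_div_eq_sub (p q : α → ℝ) (hq : ∀ x, q x ≠ 0) :
    ∑ x, p x * log (p x / q x) = ∑ x, p x * log (p x) - ∑ x, p x * log (q x) := by
  rw [← sum_sub_distrib]
  exact sum_congr rfl fun x _ => mul_log_div_eq_sub (hq x)

lemma mul_klFun_div {p q : ℝ} (hq : q ≠ 0) : q * klFun (p / q) = p * log (p / q) + q - p := by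
  rw [klFun_apply]
  field_simp

lemma sum_mul_log_div_eq_sum_mul_klFun (p q : α → ℝ) (hq : ∀ x, q x ≠ 0)
    (hpq : ∑ x, p x = ∑ x, q x) :
    ∑ x, p x * log (p x / q x) = ∑ x, q x * klFun (p x / q x) := by
  simp only [mul_klFun_div (hq _), sum_sub_distrib, sum_add_distrib, hpq, add_sub_cancel_right]

lemma sum_mul_log_div_nonneg {p q : α → ℝ} (hp : ∀ x, 0 ≤ p x) (hq : ∀ x, 0 < q x)
    (hpq : ∑ x, p x = ∑ x, q x) : 0 ≤ ∑ x, p x * log (p x / q x) := by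
  rw [sum_mul_log_div_eq_sum_mul_klFun p q (fun x => (hq x).ne') hpq]
  exact sum_nonneg fun x _ => mul_nonneg (hq x).le (klFun_nonneg (div_nonneg (hp x) (hq x).le))

lemma eq_of_sum_mul_log_div_nonpos {p q : α → ℝ} (hp : ∀ x, 0 ≤ p x) (hq : ∀ x, 0 < q x)
    (hpq : ∑ x, p x = ∑ x, q x) (h : ∑ x, p x * log (p x / q x) ≤ 0) : p = q := by
  have hnonneg x : 0 ≤ q x * klFun (p x / q x) :=
    mul_nonneg (hq x).le (klFun_nonneg (div_nonneg (hp x) (hq x).le))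
  rw [sum_mul_log_div_eq_sum_mul_klFun p q (fun x => (hq x).ne') hpq] at h
  have hzero := (sum_eq_zero_iff_of_nonneg fun x _ => hnonneg x).mp
    (le_antisymm h (sum_nonneg fun x _ => hnonneg x))
  funext x
  have hkl : klFun (p x / q x) = 0 :=
    (mul_eq_zero.mp (hzero x (mem_univ x))).resolve_left (hq x).ne'
  exact (div_eq_one_iff_eq (hq x).ne').mp
    ((klFun_eq_zero_iff (div_nonneg (hp x) (hq x).le)).mp hkl)

end Gibbs

section Tilted

variable {α : Type*} [Fintype α] {pbar : α → ℝ}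

lemma tiltedPMF_one (hsum : ∑ x, pbar x = 1) : tiltedPMF pbar 1 = pbar := by
  funext x
  simp only [tiltedPMF, rpow_one, hsum, div_one]

variable (hpos : ∀ x, 0 < pbar x)
include hpos

lemma sum_rpow_pos [Nonempty α] (β : ℝ) : 0 < ∑ y, pbar y ^ β :=
  sum_pos (fun y _ => rpow_pos_of_pos (hpos y) β) univ_nonempty

lemma tiltedPMF_pos [Nonempty α] (β : ℝ) (x : α) : 0 < tiltedPMF pbar β x :=
  div_pos (rpow_pos_of_pos (hpos x) β) (sum_rpow_pos hpos β)

lemma sum_tiltedPMF [Nonempty α] (β : ℝ) : ∑ x, tiltedPMF pbar β x = 1 := by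
  simp only [tiltedPMF]
  rw [← sum_div, div_self (sum_rpow_pos hpos β).ne']

lemma log_tiltedPMF [Nonempty α] (β : ℝ) (x : α) :
    log (tiltedPMF pbar β x) = β * log (pbar x) - log (∑ y, pbar y ^ β) := by
  simp only [tiltedPMF]
  rw [log_div (rpow_pos_of_pos (hpos x) β).ne' (sum_rpow_pos hpos β).ne',
    log_rpow (hpos x)]

lemma sum_mul_log_tiltedPMF [Nonempty α] (β : ℝ) (r : α → ℝ) :
    ∑ x, r x * log (tiltedPMF pbar β x)
      = β * ∑ x, r x * log (pbar x) - (∑ x, r x) * log (∑ y, pbar y ^ β) := by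
  calc ∑ x, r x * log (tiltedPMF pbar β x)
      _ = ∑ x, (β * (r x * log (pbar x)) - r x * log (∑ y, pbar y ^ β)) :=
        sum_congr rfl fun x _ => by rw [log_tiltedPMF hpos]; ring
      _ = _ := by rw [sum_sub_distrib, ← mul_sum, ← sum_mul]

lemma continuous_tiltedPMF [Nonempty α] (x : α) : Continuous fun β => tiltedPMF pbar β x :=
  (continuous_const.rpow continuous_id fun _ => Or.inl (hpos x).ne').div
    (continuous_finsetSum _ fun y _ => continuous_const.rpow continuous_id
      fun _ => Or.inl (hpos y).ne')
    fun β => (sum_rpow_pos hpos β).ne'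

lemma continuous_sum_tiltedPMF_mul_log_div [Nonempty α] :
    Continuous fun β => ∑ x, tiltedPMF pbar β x * log (tiltedPMF pbar β x / pbar x) :=
  continuous_finsetSum _ fun x _ => (continuous_tiltedPMF hpos x).mul
    (((continuous_tiltedPMF hpos x).div_const _).log
      fun β => (div_pos (tiltedPMF_pos hpos β x) (hpos x)).ne')

lemma tiltedPMF_gibbs [Nonempty α] (β : ℝ) {p : α → ℝ} (hp : ∀ x, 0 ≤ p x)
    (hps : ∑ x, p x = 1) :
    β * (∑ x, tiltedPMF pbar β x * log (tiltedPMF pbar β x / pbar x)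
        - ∑ x, p x * log (p x / pbar x))
      ≤ (1 - β) * (∑ x, p x * log (p x) - ∑ x, tiltedPMF pbar β x * log (tiltedPMF pbar β x)) := by
  have ht_ne x : tiltedPMF pbar β x ≠ 0 := (tiltedPMF_pos hpos β x).ne'
  have hgibbs := sum_mul_log_div_nonneg hp (tiltedPMF_pos hpos β) (by rw [hps, sum_tiltedPMF hpos])
  rw [sum_mul_log_div_eq_sub _ _ ht_ne, sum_mul_log_tiltedPMF hpos, hps] at hgibbs
  have hlog_t := sum_mul_log_tiltedPMF hpos β (tiltedPMF pbar β)
  rw [sum_tiltedPMF hpos] at hlog_t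
  rw [sum_mul_log_div_eq_sub _ _ fun x => (hpos x).ne',
    sum_mul_log_div_eq_sub _ _ fun x => (hpos x).ne', hlog_t]
  linear_combination hgibbs

lemma sum_tiltedPMF_mul_log_le [Nonempty α] {β : ℝ} (hβ : β < 1) {p : α → ℝ}
    (hp : ∀ x, 0 ≤ p x) (hps : ∑ x, p x = 1)
    (hkl : 0 ≤ β * (∑ x, tiltedPMF pbar β x * log (tiltedPMF pbar β x / pbar x)
        - ∑ x, p x * log (p x / pbar x))) :
    ∑ x, tiltedPMF pbar β x * log (tiltedPMF pbar β x) ≤ ∑ x, p x * log (p x) :=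
  sub_nonneg.mp <| nonneg_of_mul_nonneg_right (hkl.trans (tiltedPMF_gibbs hpos β hp hps))
    (sub_pos.mpr hβ)

end Tilted

/-- Discrete maximum-entropy trust region: for a strictly positive nominal pmf `p̄` on a finite
nonempty type and a KL budget `ε ≥ 0`, the maximum of the Shannon entropy
`H(p) = -∑ p(x) log p(x)` over pmfs `p` with `D_KL(p ‖ p̄) ≤ ε` is attained, and it is attained
by a tilted distribution `p_β(x) = p̄(x)^β / ∑_y p̄(y)^β` for some `β ∈ [0, 1]`. -/
theorem maxent_in_kl_ball_is_tilted {α : Type*} [Fintype α] [Nonempty α]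
    (pbar : α → ℝ) (hpos : ∀ x, 0 < pbar x) (hsum : ∑ x, pbar x = 1)
    (ε : ℝ) (hε : 0 ≤ ε) :
    ∃ β ∈ Set.Icc (0 : ℝ) 1,
      (∀ x, 0 ≤ tiltedPMF pbar β x) ∧ (∑ x, tiltedPMF pbar β x = 1) ∧
      (∑ x, tiltedPMF pbar β x * Real.log (tiltedPMF pbar β x / pbar x)) ≤ ε ∧
      ∀ p : α → ℝ, (∀ x, 0 ≤ p x) → (∑ x, p x = 1) →
        (∑ x, p x * Real.log (p x / pbar x)) ≤ ε →
        (-∑ x, p x * Real.log (p x)) ≤ (-∑ x, tiltedPMF pbar β x * Real.log (tiltedPMF pbar β x)) := by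
  have hkl_one : ∑ x, tiltedPMF pbar 1 x * log (tiltedPMF pbar 1 x / pbar x) = 0 := by
    simp [tiltedPMF_one hsum]
  by_cases hkl_zero : ∑ x, tiltedPMF pbar 0 x * log (tiltedPMF pbar 0 x / pbar x) ≤ ε
  · refine ⟨0, ⟨le_rfl, zero_le_one⟩, fun x => (tiltedPMF_pos hpos 0 x).le, sum_tiltedPMF hpos 0,
      hkl_zero, fun p hp hps _ => neg_le_neg ?_⟩
    exact sum_tiltedPMF_mul_log_le hpos zero_lt_one hp hps (by simp)
  obtain ⟨β, hβ, hkl_β⟩ := intermediate_value_Icc' zero_le_one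
    (continuous_sum_tiltedPMF_mul_log_div hpos).continuousOn
    (⟨hkl_one.symm ▸ hε, le_of_not_ge hkl_zero⟩ : ε ∈ Set.Icc _ _)
  refine ⟨β, hβ, fun x => (tiltedPMF_pos hpos β x).le, sum_tiltedPMF hpos β, hkl_β.le,
    fun p hp hps hkl_p => neg_le_neg ?_⟩
  rcases hβ.2.lt_or_eq with hβ_lt | rfl
  · exact sum_tiltedPMF_mul_log_le hpos hβ_lt hp hps (mul_nonneg hβ.1 (by linarith))
  · obtain rfl : p = pbar :=
      eq_of_sum_mul_log_div_nonpos hp hpos (hps.trans hsum.symm) (by linarith)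
    rw [tiltedPMF_one hsum]
end
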